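/- With M, M₁, M₂, η, ξ as in the amalgam setup, suppose that for every pair (X,Y) of elements of the lattice 𝓛(M₁,M₂) (sets whose intersections with E₁ and E₂ are flats in M₁ resp. M₂), at least one of η or ξ satisfies the submodular inequality on (X,Y). Then ξ is submodular on all of 𝒫(E), and hence is the rank function of the proper amalgam of M₁ and M₂ along M. -/

import Mathlib

open Set

namespace StickyKantor

variable {α : Type*}

/-- The rank of a set in a matroid, as an integer (junk value `0` when infinite). -/
noncomputable def rk (M : Matroid α) (X : Set α) : ℤ :=
  ((⨆ I ∈ {I : Set α | M.Indep I ∧ I ⊆ X}, I.encard).toNat : ℤ)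

/-- The modular defect of a pair of sets. -/
noncomputable def mdefect (M : Matroid α) (X Y : Set α) : ℤ :=
  rk M X + rk M Y - rk M (X ∪ Y) - rk M (X ∩ Y)

/-- A modular pair of sets. -/
def ModularPair (M : Matroid α) (X Y : Set α) : Prop :=
  rk M X + rk M Y = rk M (X ∪ Y) + rk M (X ∩ Y)

/-- `M'` is an extension of `M`: it has a larger ground set and restricts to `M`. -/
def IsExtension (M' M : Matroid α) : Prop :=
  M.E ⊆ M'.E ∧ M = M'.restrict M.E

/-- A point: a rank-1 flat. -/
def IsPoint (M : Matroid α) (p : Set α) : Prop := M.IsFlat p ∧ rk M p = 1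

/-- A line: a rank-2 flat. -/
def IsLine (M : Matroid α) (l : Set α) : Prop := M.IsFlat l ∧ rk M l = 2

/-- A plane: a rank-3 flat. -/
def IsPlane (M : Matroid α) (e : Set α) : Prop := M.IsFlat e ∧ rk M e = 3

/-- Two lines are coplanar if their join has rank at most 3. -/
def Coplanar (M : Matroid α) (l₁ l₂ : Set α) : Prop := rk M (l₁ ∪ l₂) ≤ 3

/-- A hyperplane: a maximal proper flat. -/
def IsHyperplane (M : Matroid α) (H : Set α) : Prop :=
  M.IsFlat H ∧ H ≠ M.E ∧ ∀ F, M.IsFlat F → H ⊂ F → F = M.E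

/-- A matroid is hypermodular if every pair of hyperplanes is a modular pair. -/
def Hypermodular (M : Matroid α) : Prop :=
  ∀ H₁ H₂, IsHyperplane M H₁ → IsHyperplane M H₂ → ModularPair M H₁ H₂

/-- A matroid is modular if every pair of flats is a modular pair. -/
def Modular (M : Matroid α) : Prop :=
  ∀ F₁ F₂, M.IsFlat F₁ → M.IsFlat F₂ → ModularPair M F₁ F₂

/-- A modular cut: an up-closed family of flats closed under intersections of
modular pairs. -/
def IsModularCut (M : Matroid α) (𝓜 : Set (Set α)) : Prop :=
  (∀ F ∈ 𝓜, M.IsFlat F) ∧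
  (∀ F ∈ 𝓜, ∀ F', M.IsFlat F' → F ⊆ F' → F' ∈ 𝓜) ∧
  (∀ F₁ ∈ 𝓜, ∀ F₂ ∈ 𝓜, ModularPair M F₁ F₂ → F₁ ∩ F₂ ∈ 𝓜)

/-- The principal modular cut of a flat `F`. -/
def principalCut (M : Matroid α) (F : Set α) : Set (Set α) :=
  {G | M.IsFlat G ∧ F ⊆ G}

/-- The modular cut generated by a family of flats. -/
def genCut (M : Matroid α) (A : Set (Set α)) : Set (Set α) :=
  ⋂₀ {𝓜 | IsModularCut M 𝓜 ∧ A ⊆ 𝓜}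

/-- A non-modular pair of flats is intersectable if the modular cut it generates is
not the principal modular cut of its intersection. -/
def Intersectable (M : Matroid α) (X Y : Set α) : Prop :=
  genCut M {X, Y} ≠ principalCut M (X ∩ Y)

/-- A matroid is OTE (only trivially extendable) if every nonempty modular cut
is principal. -/
def OTE (M : Matroid α) : Prop :=
  ∀ 𝓜, IsModularCut M 𝓜 → 𝓜 ≠ ∅ → ∃ F, M.IsFlat F ∧ 𝓜 = principalCut M F

/-- A matroid is sticky if every pair of extensions meeting exactly in its ground set
has an amalgam. -/
def Sticky (M : Matroid α) : Prop :=
  ∀ N₁ N₂ : Matroid α, IsExtension N₁ M → IsExtension N₂ M → N₁.E ∩ N₂.E = M.E →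
    ∃ A : Matroid α, A.E = N₁.E ∪ N₂.E ∧ IsExtension A N₁ ∧ IsExtension A N₂

/-- The function `η` of the amalgam construction. -/
noncomputable def eta (M M₁ M₂ : Matroid α) (X : Set α) : ℤ :=
  rk M₁ (X ∩ M₁.E) + rk M₂ (X ∩ M₂.E) - rk M (X ∩ M.E)

/-- The function `ξ` of the amalgam construction. -/
noncomputable def xi (M M₁ M₂ : Matroid α) (X : Set α) : ℤ :=
  sInf {n : ℤ | ∃ Y, X ⊆ Y ∧ Y ⊆ M₁.E ∪ M₂.E ∧ n = eta M M₁ M₂ Y}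

/-- The lattice `𝓛(M₁,M₂)` of sets whose traces on both ground sets are flats. -/
def latticeL (M₁ M₂ : Matroid α) : Set (Set α) :=
  {X | X ⊆ M₁.E ∪ M₂.E ∧ M₁.IsFlat (X ∩ M₁.E) ∧ M₂.IsFlat (X ∩ M₂.E)}

/-! The function `ξ` is monotone, vanishes on `∅`, grows by at most one per added element, and
agrees with `r₁` on `E₁` and with `r₂` on `E₂`. Its defining minimum is attained inside
`𝓛(M₁,M₂)`, so the hypothesis on pairs from `𝓛(M₁,M₂)` yields submodularity of `ξ` on all of
`𝒫(E)`. On an infinite ground set this does not yet make `ξ` a matroid rank function; what does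
is that every set has a closed superset with the same value of `ξ`, namely an `η`-minimiser in
`𝓛(M₁,M₂)` whose traces have the largest total rank. The finite sets `I` with `ξ I = |I|` are
then the independent sets of a matroid with rank function `ξ`, which restricts to `M₁` and
`M₂`. -/

open Matroid

section Rank

variable {M N : Matroid α} {I X Y F F' R : Set α}

lemma rk_eq_toNat_eRk (M : Matroid α) (X : Set α) : rk M X = (M.eRk X).toNat := by
  have hsup : ⨆ I ∈ {I : Set α | M.Indep I ∧ I ⊆ X}, I.encard = M.eRk X := by
    refine le_antisymm (iSup₂_le fun I hI => hI.1.encard_le_eRk_of_subset hI.2) ?_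
    obtain ⟨I, hI⟩ := M.exists_isBasis' X
    rw [← hI.encard_eq_eRk]
    exact le_iSup₂ (f := fun I (_ : I ∈ {I : Set α | M.Indep I ∧ I ⊆ X}) => I.encard)
      I ⟨hI.indep, hI.subset⟩
  rw [rk, hsup]

lemma rk_eq_ncard_of_isBasis' (hI : M.IsBasis' I X) : rk M X = I.ncard := by
  rw [rk_eq_toNat_eRk, ← hI.encard_eq_eRk, ncard_def]

lemma rk_restrict (hX : X ⊆ R) : rk (M ↾ R) X = rk M X := by
  rw [rk_eq_toNat_eRk, rk_eq_toNat_eRk, restrict_eRk_eq _ hX]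

lemma rk_eq_of_isExtension (h : IsExtension N M) (hX : X ⊆ M.E) : rk M X = rk N X := by
  rw [h.2]
  exact rk_restrict hX

lemma union_closure_inter_ground (M : Matroid α) (Y : Set α) :
    (Y ∪ M.closure (Y ∩ M.E)) ∩ M.E = M.closure (Y ∩ M.E) := by
  rw [union_inter_distrib_right, inter_eq_left.2 (M.closure_subset_ground _)]
  exact union_eq_right.2 (M.subset_closure _ inter_subset_right)

lemma rk_closure (M : Matroid α) (X : Set α) : rk M (M.closure X) = rk M X := by
  rw [rk_eq_toNat_eRk, rk_eq_toNat_eRk, eRk_closure_eq]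

lemma rk_empty (M : Matroid α) : rk M ∅ = 0 := by
  simp [rk_eq_toNat_eRk]

lemma rk_nonneg (M : Matroid α) (X : Set α) : 0 ≤ rk M X := by
  rw [rk_eq_toNat_eRk]; omega

section RankFinite

variable [M.RankFinite]

lemma natCast_toNat_eRk (X : Set α) : ((M.eRk X).toNat : ℕ∞) = M.eRk X :=
  ENat.natCast_toNat (M.isRkFinite_set X).eRk_lt_top.ne

lemma rk_le_rk_iff : rk M X ≤ rk M Y ↔ M.eRk X ≤ M.eRk Y := by
  rw [rk_eq_toNat_eRk, rk_eq_toNat_eRk, Nat.cast_le, ← Nat.cast_le (α := ℕ∞), natCast_toNat_eRk,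
    natCast_toNat_eRk]

lemma rk_mono (hXY : X ⊆ Y) : rk M X ≤ rk M Y :=
  rk_le_rk_iff.2 (M.eRk_mono hXY)

lemma rk_insert_le (e : α) (X : Set α) : rk M (insert e X) ≤ rk M X + 1 := by
  have h := M.eRk_insert_le_add_one e X
  rw [← natCast_toNat_eRk X, ← natCast_toNat_eRk (insert e X)] at h
  simp only [rk_eq_toNat_eRk]
  exact_mod_cast h

lemma rk_inter_add_rk_union_le (X Y : Set α) :
    rk M (X ∩ Y) + rk M (X ∪ Y) ≤ rk M X + rk M Y := by
  have h := M.eRk_inter_add_eRk_union_le X Y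
  rw [← natCast_toNat_eRk X, ← natCast_toNat_eRk Y, ← natCast_toNat_eRk (X ∩ Y),
    ← natCast_toNat_eRk (X ∪ Y)] at h
  simp only [rk_eq_toNat_eRk]
  exact_mod_cast h

lemma rk_union_add_rk_le_of_subset (hXY : X ⊆ Y) (Z : Set α) :
    rk M (Y ∪ Z) + rk M X ≤ rk M Y + rk M (X ∪ Z) := by
  have h := rk_inter_add_rk_union_le (M := M) Y (X ∪ Z)
  rw [← union_assoc, union_eq_left.2 hXY] at h
  have := rk_mono (M := M) (subset_inter hXY (subset_union_left (t := Z)))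
  omega

lemma eq_of_isFlat_of_subset_of_rk_le (hF : M.IsFlat F) (hFF' : F ⊆ F') (hF' : F' ⊆ M.E)
    (h : rk M F' ≤ rk M F) : F' = F := by
  have hcl := (M.isRkFinite_set F).closure_eq_closure_of_subset_of_eRk_ge_eRk hFF'
    (rk_le_rk_iff.1 h)
  rw [hF.closure] at hcl
  exact (M.subset_closure F' hF').trans hcl.symm.subset |>.antisymm hFF'

lemma indep_iff_finite_and_rk_eq_ncard : M.Indep I ↔ I.Finite ∧ rk M I = I.ncard := by
  refine ⟨fun h => ⟨h.finite, rk_eq_ncard_of_isBasis' h.isBasis_self.isBasis'⟩, ?_⟩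
  rintro ⟨hfin, hrk⟩
  obtain ⟨J, hJ⟩ := M.exists_isBasis' I
  rw [rk_eq_ncard_of_isBasis' hJ, Nat.cast_inj] at hrk
  exact eq_of_subset_of_ncard_le hJ.subset hrk.ge hfin ▸ hJ.indep

lemma isExtension_of_rk_eq [N.RankFinite] (hE : M.E ⊆ N.E) (h : ∀ X ⊆ M.E, rk N X = rk M X) :
    IsExtension N M := by
  refine ⟨hE, ext_indep rfl fun I hI => ?_⟩
  rw [restrict_indep_iff, indep_iff_finite_and_rk_eq_ncard, indep_iff_finite_and_rk_eq_ncard,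
    h I hI]
  simp [hI]

end RankFinite

end Rank

/-- On an infinite `E` the first four axioms do not make `f` finitary (`f X = [X infinite]`
satisfies them); `exists_closed` is what makes `f` the rank function of a matroid. -/
structure IsRankFunction (E : Set α) (f : Set α → ℤ) : Prop where
  map_empty : f ∅ = 0
  mono : ∀ ⦃X Y⦄, X ⊆ Y → Y ⊆ E → f X ≤ f Y
  insert_le : ∀ ⦃X⦄, X ⊆ E → ∀ ⦃e⦄, e ∈ E → f (insert e X) ≤ f X + 1
  submod : ∀ ⦃X Y⦄, X ⊆ E → Y ⊆ E → f (X ∩ Y) + f (X ∪ Y) ≤ f X + f Y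
  exists_closed : ∀ ⦃X⦄, X ⊆ E →
    ∃ Y, X ⊆ Y ∧ Y ⊆ E ∧ f Y = f X ∧ ∀ e ∈ E, f (insert e Y) = f Y → e ∈ Y

namespace IsRankFunction

variable {E : Set α} {f : Set α → ℤ} {I J X : Set α} {e : α}

def Indep (E : Set α) (f : Set α → ℤ) (I : Set α) : Prop :=
  I ⊆ E ∧ I.Finite ∧ f I = I.ncard

lemma union_le_add_ncard (hf : IsRankFunction E f) (hI : I ⊆ E) {S : Set α} (hS : S.Finite)
    (hSE : S ⊆ E) : f (I ∪ S) ≤ f I + S.ncard := by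
  induction S, hS using Set.Finite.induction_on with
  | empty => simp
  | @insert a S haS hS ih =>
    have h := hf.insert_le (union_subset hI ((subset_insert a S).trans hSE)) (hSE (mem_insert a S))
    rw [union_insert, ncard_insert_of_notMem haS hS]
    push_cast
    linarith [ih ((subset_insert a S).trans hSE)]

lemma le_ncard (hf : IsRankFunction E f) (hI : I.Finite) (hIE : I ⊆ E) : f I ≤ I.ncard := by
  simpa [hf.map_empty] using hf.union_le_add_ncard (empty_subset E) hI hIE

lemma eq_of_forall_insert_eq (hf : IsRankFunction E f) (hIX : I ⊆ X) (hX : X ⊆ E)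
    (h : ∀ e ∈ X, f (insert e I) = f I) : f X = f I := by
  obtain ⟨Y, hIY, hYE, hYI, hYclosed⟩ := hf.exists_closed (hIX.trans hX)
  have hXY : X ⊆ Y := fun e he => by
    have heY : insert e Y ⊆ E := insert_subset (hX he) hYE
    refine hYclosed e (hX he) (le_antisymm ?_ (hf.mono (subset_insert e Y) heY))
    have hsub := hf.submod hYE (insert_subset (hX he) (hIX.trans hX))
    have hI : f I ≤ f (Y ∩ insert e I) :=
      hf.mono (subset_inter hIY (subset_insert e I)) (inter_subset_left.trans hYE)
    rw [union_insert, union_eq_left.2 hIY, h e he] at hsub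
    linarith
  exact le_antisymm (hYI ▸ hf.mono hXY hYE) (hf.mono hIX hX)

lemma indep_subset (hf : IsRankFunction E f) (hJ : Indep E f J) (hIJ : I ⊆ J) : Indep E f I := by
  obtain ⟨hJE, hJfin, hfJ⟩ := hJ
  have hIE := hIJ.trans hJE
  have hIfin := hJfin.subset hIJ
  refine ⟨hIE, hIfin, le_antisymm (hf.le_ncard hIfin hIE) ?_⟩
  have h := hf.union_le_add_ncard hIE (hJfin.sdiff (t := I)) (sdiff_subset.trans hJE)
  rw [union_sdiff_cancel hIJ, hfJ, ← ncard_sdiff_add_ncard_of_subset hIJ hJfin] at h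
  push_cast at h
  linarith

lemma insert_eq_of_not_indep (hf : IsRankFunction E f) (hI : Indep E f I) (he : e ∈ E)
    (hnot : ¬ Indep E f (insert e I)) : f (insert e I) = f I := by
  obtain ⟨hIE, hIfin, hfI⟩ := hI
  by_cases heI : e ∈ I
  · rw [insert_eq_of_mem heI]
  have hle := hf.insert_le hIE he
  have hge := hf.mono (subset_insert e I) (insert_subset he hIE)
  have hne : f (insert e I) ≠ (insert e I).ncard := fun h =>
    hnot ⟨insert_subset he hIE, hIfin.insert e, h⟩
  rw [ncard_insert_of_notMem heI hIfin] at hne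
  push_cast at hne
  omega

lemma indep_aug (hf : IsRankFunction E f) (hI : Indep E f I) (hJ : Indep E f J)
    (hIJ : I.encard < J.encard) : ∃ e ∈ J, e ∉ I ∧ Indep E f (insert e I) := by
  by_contra! hcon
  have hspan : f (I ∪ J) = f I :=
    hf.eq_of_forall_insert_eq subset_union_left (union_subset hI.1 hJ.1) fun e he => by
      by_cases heI : e ∈ I
      · rw [insert_eq_of_mem heI]
      · exact hf.insert_eq_of_not_indep hI (hJ.1 (he.resolve_left heI))
          (hcon e (he.resolve_left heI) heI)
  have hmono := hf.mono subset_union_right (union_subset hI.1 hJ.1)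
  have hlt : I.ncard < J.ncard := by
    rwa [← Nat.cast_lt (α := ℕ∞), hI.2.1.cast_ncard_eq, hJ.2.1.cast_ncard_eq]
  have := hI.2.2
  have := hJ.2.2
  omega

lemma indep_bdd (hf : IsRankFunction E f) : ∃ n : ℕ, ∀ I, Indep E f I → I.encard ≤ n := by
  refine ⟨(f E).toNat, fun I ⟨hIE, hIfin, hfI⟩ => ?_⟩
  have h := hf.mono hIE subset_rfl
  rw [← hIfin.cast_ncard_eq, Nat.cast_le]
  omega

protected noncomputable def matroid (hf : IsRankFunction E f) : Matroid α :=
  (IndepMatroid.ofBddAugment E (Indep E f) ⟨empty_subset E, finite_empty, by simp [hf.map_empty]⟩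
    (fun _ _ hJ hIJ => hf.indep_subset hJ hIJ) (fun _ _ hI hJ h => hf.indep_aug hI hJ h)
    hf.indep_bdd fun _ hI => hI.1).matroid

@[simp] lemma matroid_indep (hf : IsRankFunction E f) : hf.matroid.Indep I ↔ Indep E f I := Iff.rfl

instance (hf : IsRankFunction E f) : hf.matroid.RankFinite := by
  obtain ⟨B, hB⟩ := hf.matroid.exists_isBase
  exact hB.rankFinite_of_finite (hf.matroid_indep.1 hB.indep).2.1

lemma rk_matroid (hf : IsRankFunction E f) (hX : X ⊆ E) : rk hf.matroid X = f X := by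
  obtain ⟨I, hI⟩ := hf.matroid.exists_isBasis' X
  have hIind : Indep E f I := hf.matroid_indep.1 hI.indep
  have hspan := hf.eq_of_forall_insert_eq hI.subset hX fun e he => by
    by_cases heI : e ∈ I
    · rw [insert_eq_of_mem heI]
    · exact hf.insert_eq_of_not_indep hIind (hX he)
        fun h => hI.insert_not_indep ⟨he, heI⟩ (hf.matroid_indep.2 h)
  rw [rk_eq_ncard_of_isBasis' hI, hspan, hIind.2.2]

end IsRankFunction

structure AmalgamSetting (M M₁ M₂ : Matroid α) : Prop where
  isExtension_left : IsExtension M₁ M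
  isExtension_right : IsExtension M₂ M
  inter_ground : M₁.E ∩ M₂.E = M.E

lemma eta_comm (M M₁ M₂ : Matroid α) (X : Set α) : eta M M₁ M₂ X = eta M M₂ M₁ X := by
  simp only [eta]; ring

lemma xi_comm (M M₁ M₂ : Matroid α) (X : Set α) : xi M M₁ M₂ X = xi M M₂ M₁ X := by
  simp only [xi, eta_comm M M₁ M₂, union_comm M₁.E]

lemma eq_of_mem_latticeL_of_subset_of_rk_le {M₁ M₂ : Matroid α} [M₁.RankFinite] [M₂.RankFinite]
    {Y W : Set α} (hY : Y ∈ latticeL M₁ M₂) (hW : W ⊆ M₁.E ∪ M₂.E) (hYW : Y ⊆ W)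
    (hrk : rk M₁ (W ∩ M₁.E) + rk M₂ (W ∩ M₂.E) ≤ rk M₁ (Y ∩ M₁.E) + rk M₂ (Y ∩ M₂.E)) :
    W = Y := by
  have h₁ := rk_mono (M := M₁) (inter_subset_inter_left M₁.E hYW)
  have h₂ := rk_mono (M := M₂) (inter_subset_inter_left M₂.E hYW)
  have hW₁ := eq_of_isFlat_of_subset_of_rk_le hY.2.1 (inter_subset_inter_left M₁.E hYW)
    inter_subset_right (by omega)
  have hW₂ := eq_of_isFlat_of_subset_of_rk_le hY.2.2 (inter_subset_inter_left M₂.E hYW)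
    inter_subset_right (by omega)
  rw [← inter_eq_left.2 hW, ← inter_eq_left.2 hY.1, inter_union_distrib_left,
    inter_union_distrib_left, hW₁, hW₂]

namespace AmalgamSetting

variable {M M₁ M₂ : Matroid α} {X Y : Set α} {e : α}

lemma symm (h : AmalgamSetting M M₁ M₂) : AmalgamSetting M M₂ M₁ :=
  ⟨h.isExtension_right, h.isExtension_left, by rw [inter_comm, h.inter_ground]⟩

lemma ground_subset_left (h : AmalgamSetting M M₁ M₂) : M.E ⊆ M₁.E :=
  h.inter_ground ▸ inter_subset_left

lemma inter_ground_right (h : AmalgamSetting M M₁ M₂) (hX : X ⊆ M₁.E) : X ∩ M₂.E = X ∩ M.E := by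
  rw [← h.inter_ground, ← inter_assoc, inter_eq_left.2 hX]

lemma rk_le_eta [M₂.RankFinite] (h : AmalgamSetting M M₁ M₂) (Y : Set α) :
    rk M₁ (Y ∩ M₁.E) ≤ eta M M₁ M₂ Y := by
  have hT : rk M (Y ∩ M.E) = rk M₂ (Y ∩ M.E) :=
    rk_eq_of_isExtension h.isExtension_right inter_subset_right
  have := rk_mono (M := M₂) (inter_subset_inter_right Y h.symm.ground_subset_left)
  simp only [eta]
  omega

lemma eta_nonneg [M₂.RankFinite] (h : AmalgamSetting M M₁ M₂) (Y : Set α) :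
    0 ≤ eta M M₁ M₂ Y :=
  (rk_nonneg M₁ _).trans (h.rk_le_eta Y)

lemma eta_insert_le_of_mem_left [M₁.RankFinite] [M₂.RankFinite] (h : AmalgamSetting M M₁ M₂)
    (he : e ∈ M₁.E) (Y : Set α) : eta M M₁ M₂ (insert e Y) ≤ eta M M₁ M₂ Y + 1 := by
  by_cases he₂ : e ∈ M₂.E
  · have heT : e ∈ M.E := h.inter_ground ▸ ⟨he, he₂⟩
    rw [eta, eta, insert_inter_of_mem he, insert_inter_of_mem he₂, insert_inter_of_mem heT]
    have hsub : rk M₁ (insert e (Y ∩ M₁.E)) + rk M₁ (Y ∩ M.E)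
        ≤ rk M₁ (Y ∩ M₁.E) + rk M₁ (insert e (Y ∩ M.E)) := by
      simpa only [union_singleton] using
        rk_union_add_rk_le_of_subset (inter_subset_inter_right Y h.ground_subset_left) {e}
    have hT : rk M (Y ∩ M.E) = rk M₁ (Y ∩ M.E) :=
      rk_eq_of_isExtension h.isExtension_left inter_subset_right
    have hT' : rk M (insert e (Y ∩ M.E)) = rk M₁ (insert e (Y ∩ M.E)) :=
      rk_eq_of_isExtension h.isExtension_left (insert_subset heT inter_subset_right)
    have := rk_insert_le (M := M₂) e (Y ∩ M₂.E)
    omega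
  · have heT : e ∉ M.E := fun heT => he₂ (h.symm.ground_subset_left heT)
    rw [eta, eta, insert_inter_of_mem he, insert_inter_of_notMem he₂, insert_inter_of_notMem heT]
    linarith [rk_insert_le (M := M₁) e (Y ∩ M₁.E)]

lemma eta_insert_le [M₁.RankFinite] [M₂.RankFinite] (h : AmalgamSetting M M₁ M₂)
    (he : e ∈ M₁.E ∪ M₂.E) (Y : Set α) : eta M M₁ M₂ (insert e Y) ≤ eta M M₁ M₂ Y + 1 := by
  rcases he with he | he
  · exact h.eta_insert_le_of_mem_left he Y
  · rw [eta_comm, eta_comm M M₁]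
    exact h.symm.eta_insert_le_of_mem_left he Y

/-- Closing the `M₁`-trace keeps its rank and adds to the `M₂`-trace only elements of `T`,
which submodularity in `M₂` pays for. -/
lemma eta_union_closure_left_le [M₂.RankFinite] (h : AmalgamSetting M M₁ M₂) (Y : Set α) :
    eta M M₁ M₂ (Y ∪ M₁.closure (Y ∩ M₁.E)) ≤ eta M M₁ M₂ Y := by
  set B := M₁.closure (Y ∩ M₁.E) ∩ M.E with hB
  have hB₂ : M₁.closure (Y ∩ M₁.E) ∩ M₂.E = B :=
    h.inter_ground_right (M₁.closure_subset_ground _)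
  rw [eta, eta, union_closure_inter_ground, rk_closure, union_inter_distrib_right,
    union_inter_distrib_right, hB₂, ← hB]
  have hsub : rk M₂ ((Y ∩ M₂.E) ∪ B) + rk M₂ (Y ∩ M.E)
      ≤ rk M₂ (Y ∩ M₂.E) + rk M₂ ((Y ∩ M.E) ∪ B) :=
    rk_union_add_rk_le_of_subset (inter_subset_inter_right Y h.symm.ground_subset_left) B
  have hT : rk M (Y ∩ M.E) = rk M₂ (Y ∩ M.E) :=
    rk_eq_of_isExtension h.isExtension_right inter_subset_right
  have hT' : rk M ((Y ∩ M.E) ∪ B) = rk M₂ ((Y ∩ M.E) ∪ B) :=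
    rk_eq_of_isExtension h.isExtension_right (union_subset inter_subset_right inter_subset_right)
  omega

lemma eta_union_closure_right_le [M₁.RankFinite] (h : AmalgamSetting M M₁ M₂) (Y : Set α) :
    eta M M₁ M₂ (Y ∪ M₂.closure (Y ∩ M₂.E)) ≤ eta M M₁ M₂ Y := by
  rw [eta_comm, eta_comm M M₁]
  exact h.symm.eta_union_closure_left_le Y

lemma exists_superset_mem_latticeL_or_rk_lt [M₁.RankFinite] [M₂.RankFinite]
    (h : AmalgamSetting M M₁ M₂) (hY : Y ⊆ M₁.E ∪ M₂.E) :
    ∃ Y', Y ⊆ Y' ∧ Y' ⊆ M₁.E ∪ M₂.E ∧ eta M M₁ M₂ Y' ≤ eta M M₁ M₂ Y ∧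
      (Y' ∈ latticeL M₁ M₂ ∨ rk M₁ (Y ∩ M₁.E) < rk M₁ (Y' ∩ M₁.E)) := by
  set Y₁ := Y ∪ M₁.closure (Y ∩ M₁.E)
  set Y₂ := Y₁ ∪ M₂.closure (Y₁ ∩ M₂.E)
  have hY₂ : Y₂ ⊆ M₁.E ∪ M₂.E :=
    union_subset (union_subset hY ((M₁.closure_subset_ground _).trans subset_union_left))
      ((M₂.closure_subset_ground _).trans subset_union_right)
  refine ⟨Y₂, subset_union_left.trans subset_union_left, hY₂,
    (h.eta_union_closure_right_le Y₁).trans (h.eta_union_closure_left_le Y), ?_⟩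
  by_cases hflat : Y₂ ∩ M₁.E = M₁.closure (Y ∩ M₁.E)
  · refine Or.inl ⟨hY₂, hflat ▸ M₁.isFlat_closure _, ?_⟩
    rw [union_closure_inter_ground]
    exact M₂.isFlat_closure _
  refine Or.inr (lt_of_not_ge fun hle => hflat ?_)
  rw [← rk_closure M₁ (Y ∩ M₁.E)] at hle
  exact eq_of_isFlat_of_subset_of_rk_le (M₁.isFlat_closure _)
    (subset_inter (subset_union_right.trans subset_union_left) (M₁.closure_subset_ground _))
    inter_subset_right hle

lemma exists_mem_latticeL_superset [M₁.RankFinite] [M₂.RankFinite]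
    (h : AmalgamSetting M M₁ M₂) {Y : Set α} (hY : Y ⊆ M₁.E ∪ M₂.E) :
    ∃ Z ∈ latticeL M₁ M₂, Y ⊆ Z ∧ eta M M₁ M₂ Z ≤ eta M M₁ M₂ Y := by
  obtain ⟨Y', hYY', hY', heta, hY'L | hlt⟩ := h.exists_superset_mem_latticeL_or_rk_lt hY
  · exact ⟨Y', hY'L, hYY', heta⟩
  obtain ⟨Z, hZ, hY'Z, hZeta⟩ := h.exists_mem_latticeL_superset hY'
  exact ⟨Z, hZ, hYY'.trans hY'Z, hZeta.trans heta⟩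
termination_by (rk M₁ M₁.E - rk M₁ (Y ∩ M₁.E)).toNat
decreasing_by
  have := rk_mono (M := M₁) (inter_subset_right : Y' ∩ M₁.E ⊆ M₁.E)
  omega

lemma xi_le_eta [M₂.RankFinite] (h : AmalgamSetting M M₁ M₂) (hXY : X ⊆ Y)
    (hY : Y ⊆ M₁.E ∪ M₂.E) : xi M M₁ M₂ X ≤ eta M M₁ M₂ Y :=
  csInf_le ⟨0, by rintro _ ⟨Z, -, -, rfl⟩; exact h.eta_nonneg Z⟩ ⟨Y, hXY, hY, rfl⟩

lemma exists_mem_latticeL_eta_eq_xi [M₁.RankFinite] [M₂.RankFinite]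
    (h : AmalgamSetting M M₁ M₂) (hX : X ⊆ M₁.E ∪ M₂.E) :
    ∃ Y ∈ latticeL M₁ M₂, X ⊆ Y ∧ eta M M₁ M₂ Y = xi M M₁ M₂ X := by
  obtain ⟨Y, hXY, hY, hYeta⟩ := Int.csInf_mem (s := {n | ∃ Y, X ⊆ Y ∧ Y ⊆ M₁.E ∪ M₂.E ∧
    n = eta M M₁ M₂ Y}) ⟨_, _, hX, subset_rfl, rfl⟩
    ⟨0, by rintro _ ⟨Z, -, -, rfl⟩; exact h.eta_nonneg Z⟩
  obtain ⟨Z, hZ, hYZ, hZeta⟩ := h.exists_mem_latticeL_superset hY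
  refine ⟨Z, hZ, hXY.trans hYZ, le_antisymm ?_ (h.xi_le_eta (hXY.trans hYZ) hZ.1)⟩
  rw [xi, hYeta]
  exact hZeta

lemma xi_mono [M₁.RankFinite] [M₂.RankFinite] (h : AmalgamSetting M M₁ M₂) (hXY : X ⊆ Y)
    (hY : Y ⊆ M₁.E ∪ M₂.E) : xi M M₁ M₂ X ≤ xi M M₁ M₂ Y := by
  obtain ⟨Z, hZ, hYZ, hZeta⟩ := h.exists_mem_latticeL_eta_eq_xi hY
  exact hZeta ▸ h.xi_le_eta (hXY.trans hYZ) hZ.1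

lemma xi_insert_le [M₁.RankFinite] [M₂.RankFinite] (h : AmalgamSetting M M₁ M₂)
    (hX : X ⊆ M₁.E ∪ M₂.E) (he : e ∈ M₁.E ∪ M₂.E) :
    xi M M₁ M₂ (insert e X) ≤ xi M M₁ M₂ X + 1 := by
  obtain ⟨Y, hY, hXY, hYeta⟩ := h.exists_mem_latticeL_eta_eq_xi hX
  rw [← hYeta]
  exact (h.xi_le_eta (insert_subset_insert hXY) (insert_subset he hY.1)).trans
    (h.eta_insert_le he Y)

lemma xi_empty [M₁.RankFinite] [M₂.RankFinite] (h : AmalgamSetting M M₁ M₂) :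
    xi M M₁ M₂ ∅ = 0 := by
  obtain ⟨Y, -, -, hYeta⟩ := h.exists_mem_latticeL_eta_eq_xi (empty_subset (M₁.E ∪ M₂.E))
  refine le_antisymm ?_ (hYeta ▸ h.eta_nonneg Y)
  simpa [eta, rk_empty] using h.xi_le_eta subset_rfl (empty_subset (M₁.E ∪ M₂.E))

lemma xi_eq_rk [M₁.RankFinite] [M₂.RankFinite] (h : AmalgamSetting M M₁ M₂) (hX : X ⊆ M₁.E) :
    xi M M₁ M₂ X = rk M₁ X := by
  obtain ⟨Y, -, hXY, hYeta⟩ := h.exists_mem_latticeL_eta_eq_xi (hX.trans subset_union_left)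
  refine le_antisymm ?_ (hYeta ▸ (rk_mono (subset_inter hXY hX)).trans (h.rk_le_eta Y))
  have hT : rk M (X ∩ M.E) = rk M₂ (X ∩ M.E) :=
    rk_eq_of_isExtension h.isExtension_right inter_subset_right
  have h_eta := h.xi_le_eta subset_rfl (hX.trans subset_union_left)
  rwa [eta, inter_eq_left.2 hX, h.inter_ground_right hX, hT, add_sub_cancel_right] at h_eta

/-- A minimiser of `η` in `𝓛(M₁,M₂)` whose traces have the largest total rank is closed: a
larger minimiser would contain it and have equal trace ranks, hence equal (flat) traces. -/
lemma xi_exists_closed [M₁.RankFinite] [M₂.RankFinite] (h : AmalgamSetting M M₁ M₂)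
    (hX : X ⊆ M₁.E ∪ M₂.E) : ∃ Y, X ⊆ Y ∧ Y ⊆ M₁.E ∪ M₂.E ∧ xi M M₁ M₂ Y = xi M M₁ M₂ X ∧
      ∀ e ∈ M₁.E ∪ M₂.E, xi M M₁ M₂ (insert e Y) = xi M M₁ M₂ Y → e ∈ Y := by
  obtain ⟨Y₀, hY₀, hXY₀, hY₀eta⟩ := h.exists_mem_latticeL_eta_eq_xi hX
  obtain ⟨_, ⟨Y, ⟨hY, hXY, hYeta⟩, rfl⟩, hmax⟩ := Int.exists_greatest_of_bdd
    (P := fun v => ∃ Y, (Y ∈ latticeL M₁ M₂ ∧ X ⊆ Y ∧ eta M M₁ M₂ Y = xi M M₁ M₂ X) ∧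
      v = rk M₁ (Y ∩ M₁.E) + rk M₂ (Y ∩ M₂.E))
    ⟨rk M₁ M₁.E + rk M₂ M₂.E, by
      rintro _ ⟨Y, -, rfl⟩
      exact add_le_add (rk_mono inter_subset_right) (rk_mono inter_subset_right)⟩
    ⟨_, Y₀, ⟨hY₀, hXY₀, hY₀eta⟩, rfl⟩
  have hYX : xi M M₁ M₂ Y = xi M M₁ M₂ X :=
    le_antisymm (hYeta ▸ h.xi_le_eta subset_rfl hY.1) (h.xi_mono hXY hY.1)
  refine ⟨Y, hXY, hY.1, hYX, fun e he hins => ?_⟩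
  obtain ⟨W, hW, heYW, hWeta⟩ := h.exists_mem_latticeL_eta_eq_xi (insert_subset he hY.1)
  have hYW : Y ⊆ W := (subset_insert e Y).trans heYW
  have hWY : W = Y := eq_of_mem_latticeL_of_subset_of_rk_le hY hW.1 hYW
    (hmax _ ⟨W, ⟨hW, hXY.trans hYW, by rw [hWeta, hins, hYX]⟩, rfl⟩)
  exact hWY ▸ heYW (mem_insert e Y)

lemma xi_submod [M₁.RankFinite] [M₂.RankFinite] (h : AmalgamSetting M M₁ M₂)
    (hsub : ∀ X ∈ latticeL M₁ M₂, ∀ Y ∈ latticeL M₁ M₂,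
      eta M M₁ M₂ (X ∩ Y) + eta M M₁ M₂ (X ∪ Y) ≤ eta M M₁ M₂ X + eta M M₁ M₂ Y ∨
      xi M M₁ M₂ (X ∩ Y) + xi M M₁ M₂ (X ∪ Y) ≤ xi M M₁ M₂ X + xi M M₁ M₂ Y)
    (hX : X ⊆ M₁.E ∪ M₂.E) (hY : Y ⊆ M₁.E ∪ M₂.E) :
    xi M M₁ M₂ (X ∩ Y) + xi M M₁ M₂ (X ∪ Y) ≤ xi M M₁ M₂ X + xi M M₁ M₂ Y := by
  obtain ⟨X', hX', hXX', hX'eta⟩ := h.exists_mem_latticeL_eta_eq_xi hX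
  obtain ⟨Y', hY', hYY', hY'eta⟩ := h.exists_mem_latticeL_eta_eq_xi hY
  have hinter := inter_subset_inter hXX' hYY'
  have hunion := union_subset_union hXX' hYY'
  have hinterE : X' ∩ Y' ⊆ M₁.E ∪ M₂.E := inter_subset_left.trans hX'.1
  have hunionE := union_subset hX'.1 hY'.1
  rcases hsub X' hX' Y' hY' with hη | hξ
  · linarith [h.xi_le_eta hinter hinterE, h.xi_le_eta hunion hunionE]
  · linarith [h.xi_mono hinter hinterE, h.xi_mono hunion hunionE,
      h.xi_le_eta subset_rfl hX'.1, h.xi_le_eta subset_rfl hY'.1]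

lemma isRankFunction_xi [M₁.RankFinite] [M₂.RankFinite] (h : AmalgamSetting M M₁ M₂)
    (hsub : ∀ X ∈ latticeL M₁ M₂, ∀ Y ∈ latticeL M₁ M₂,
      eta M M₁ M₂ (X ∩ Y) + eta M M₁ M₂ (X ∪ Y) ≤ eta M M₁ M₂ X + eta M M₁ M₂ Y ∨
      xi M M₁ M₂ (X ∩ Y) + xi M M₁ M₂ (X ∪ Y) ≤ xi M M₁ M₂ X + xi M M₁ M₂ Y) :
    IsRankFunction (M₁.E ∪ M₂.E) (xi M M₁ M₂) where
  map_empty := h.xi_empty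
  mono _ _ hXY hY := h.xi_mono hXY hY
  insert_le _ hX _ he := h.xi_insert_le hX he
  submod _ _ hX hY := h.xi_submod hsub hX hY
  exists_closed _ hX := h.xi_exists_closed hX

end AmalgamSetting

theorem proper_amalgam_exists_general (M M₁ M₂ : Matroid α)
    [M₁.RankFinite] [M₂.RankFinite]
    (hext₁ : IsExtension M₁ M) (hext₂ : IsExtension M₂ M)
    (hT : M₁.E ∩ M₂.E = M.E)
    (hsub : ∀ X ∈ latticeL M₁ M₂, ∀ Y ∈ latticeL M₁ M₂,
      eta M M₁ M₂ (X ∩ Y) + eta M M₁ M₂ (X ∪ Y) ≤ eta M M₁ M₂ X + eta M M₁ M₂ Y ∨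
      xi M M₁ M₂ (X ∩ Y) + xi M M₁ M₂ (X ∪ Y) ≤ xi M M₁ M₂ X + xi M M₁ M₂ Y) :
    (∀ X Y : Set α, X ⊆ M₁.E ∪ M₂.E → Y ⊆ M₁.E ∪ M₂.E →
      xi M M₁ M₂ (X ∩ Y) + xi M M₁ M₂ (X ∪ Y) ≤ xi M M₁ M₂ X + xi M M₁ M₂ Y) ∧
    ∃ A : Matroid α, A.E = M₁.E ∪ M₂.E ∧
      IsExtension A M₁ ∧ IsExtension A M₂ ∧
      ∀ X ⊆ A.E, rk A X = xi M M₁ M₂ X := by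
  have h : AmalgamSetting M M₁ M₂ := ⟨hext₁, hext₂, hT⟩
  have hξ := h.isRankFunction_xi hsub
  refine ⟨fun X Y hX hY => hξ.submod hX hY, hξ.matroid, rfl, ?_, ?_, fun X => hξ.rk_matroid⟩
  · exact isExtension_of_rk_eq subset_union_left fun X hX =>
      (hξ.rk_matroid (hX.trans subset_union_left)).trans (h.xi_eq_rk hX)
  · exact isExtension_of_rk_eq subset_union_right fun X hX =>
      (hξ.rk_matroid (hX.trans subset_union_right)).trans (xi_comm M M₁ M₂ X ▸ h.symm.xi_eq_rk hX)

/-- if on every pair of elements of `𝓛(M₁,M₂)` at least one of `η`, `ξ`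
is submodular, then `ξ` is submodular everywhere and is the rank function of the
proper amalgam. -/
theorem proper_amalgam_exists (M M₁ M₂ : Matroid α)
    [M.RankFinite] [M₁.RankFinite] [M₂.RankFinite]
    (hext₁ : IsExtension M₁ M) (hext₂ : IsExtension M₂ M)
    (hT : M₁.E ∩ M₂.E = M.E)
    (hsub : ∀ X ∈ latticeL M₁ M₂, ∀ Y ∈ latticeL M₁ M₂,
      eta M M₁ M₂ (X ∩ Y) + eta M M₁ M₂ (X ∪ Y) ≤ eta M M₁ M₂ X + eta M M₁ M₂ Y ∨
      xi M M₁ M₂ (X ∩ Y) + xi M M₁ M₂ (X ∪ Y) ≤ xi M M₁ M₂ X + xi M M₁ M₂ Y) :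
    (∀ X Y : Set α, X ⊆ M₁.E ∪ M₂.E → Y ⊆ M₁.E ∪ M₂.E →
      xi M M₁ M₂ (X ∩ Y) + xi M M₁ M₂ (X ∪ Y) ≤ xi M M₁ M₂ X + xi M M₁ M₂ Y) ∧
    ∃ A : Matroid α, A.E = M₁.E ∪ M₂.E ∧
      IsExtension A M₁ ∧ IsExtension A M₂ ∧
      ∀ X ⊆ A.E, rk A X = xi M M₁ M₂ X :=
  proper_amalgam_exists_general M M₁ M₂ hext₁ hext₂ hT hsub

end StickyKantor
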